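/- Let d ≥ 1, s ≥ 1 and a < b be real numbers. Let I be a quadrature functional that is sign-preserving. Let E, S : ℝ^d → ℝ be continuously differentiable with gradients ∇E, ∇S, and let B̃, D̃ : ℝ^d × ℝ^d → ℝ^{d×d} satisfy, for all z, w ∈ ℝ^d: B̃(z, w) is skew-symmetric, D̃(z, w) is positive semidefinite, wᵀ B̃(z, w) = 0, and wᵀ D̃(z, w) = 0. Suppose x : ℝ → ℝ^d is a polynomial map of degree ≤ s and g_E, g_S : ℝ → ℝ^d are polynomial maps of degree ≤ s−1 such that for every polynomial map y : ℝ → ℝ^d of degree ≤ s−1: (i) I(t ↦ y(t)ᵀ x′(t)) = I(t ↦ y(t)ᵀ B̃(x(t), g_S(t)) g_E(t) + y(t)ᵀ D̃(x(t), g_E(t)) g_S(t)); (ii) I(t ↦ g_E(t)ᵀ y(t)) = ∫_a^b ∇E(x(t))ᵀ y(t) dt; and (iii) I(t ↦ g_S(t)ᵀ y(t)) = ∫_a^b ∇S(x(t))ᵀ y(t) dt. Then E(x(b)) = E(x(a)) and S(x(b)) ≥ S(x(a)). -/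

import Mathlib

open Matrix

/-!
Testing the first scheme equation against `g_E` and `g_S`, and the projection equations against
`x′` (admissible, since `x′` has degree `≤ s - 1`), gives
`E(x(b)) - E(x(a)) = ∫ ∇E(x)ᵀ x′ = I(g_Eᵀ x′) = I(g_Eᵀ B̃ g_E + g_Eᵀ D̃ g_S)` and likewise for `S`.
Skew-symmetry of `B̃` and the degeneracy `g_Eᵀ D̃(x, g_E) = 0` make the first integrand vanish
identically; the degeneracy `g_Sᵀ B̃(x, g_S) = 0` and `D̃ ⪰ 0` make the second one nonnegative, so
sign-preservation of `I` finishes.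
-/

/-- The continuous linear functional `w ↦ g ⬝ᵥ w` on `Fin d → ℝ`,
representing the gradient vector `g` as a (Fréchet) derivative. -/
noncomputable def dotCLM {d : ℕ} (g : Fin d → ℝ) : (Fin d → ℝ) →L[ℝ] ℝ :=
  LinearMap.toContinuousLinearMap
  { toFun := fun w => g ⬝ᵥ w
    map_add' := by
      intro a b
      simp [dotProduct, mul_add, Finset.sum_add_distrib]
    map_smul' := by
      intro c a
      simp [dotProduct, Finset.mul_sum, mul_left_comm] }

/-- `y : ℝ → Fin d → ℝ` is a polynomial map of degree at most `k`:
each component is a real polynomial function of degree at most `k`. -/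
def IsPolyMap {d : ℕ} (k : ℕ) (y : ℝ → Fin d → ℝ) : Prop :=
  ∀ i : Fin d, ∃ q : Polynomial ℝ, q.natDegree ≤ k ∧ ∀ t : ℝ, y t i = q.eval t

namespace IsPolyMap

variable {d k : ℕ} {y : ℝ → Fin d → ℝ}

theorem continuous (hy : IsPolyMap k y) : Continuous y :=
  continuous_pi fun i => by
    obtain ⟨q, -, hq⟩ := hy i
    simpa only [hq] using q.continuous

theorem differentiable (hy : IsPolyMap k y) : Differentiable ℝ y :=
  differentiable_pi.2 fun i => by
    obtain ⟨q, -, hq⟩ := hy i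
    simpa only [hq] using q.differentiable

protected theorem deriv (hy : IsPolyMap k y) : IsPolyMap (k - 1) (deriv y) := by
  intro i
  obtain ⟨q, hqk, hq⟩ := hy i
  refine ⟨Polynomial.derivative q,
    q.natDegree_derivative_le.trans (Nat.sub_le_sub_right hqk 1), fun t => ?_⟩
  rw [deriv_pi fun j => differentiableAt_pi.1 (hy.differentiable t) j]
  simp only [hq, Polynomial.deriv]

end IsPolyMap

theorem integral_dotProduct_deriv_eq_sub {d : ℕ} {F : (Fin d → ℝ) → ℝ}
    {g : (Fin d → ℝ) → Fin d → ℝ} (hF : ∀ z, HasFDerivAt F (dotCLM (g z)) z)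
    (hg : Continuous g) {x : ℝ → Fin d → ℝ} (hx : Differentiable ℝ x)
    (hx' : Continuous (deriv x)) (a b : ℝ) :
    ∫ t in a..b, g (x t) ⬝ᵥ deriv x t = F (x b) - F (x a) :=
  intervalIntegral.integral_eq_sub_of_hasDerivAt
    (fun t _ => (hF (x t)).comp_hasDerivAt t (hx t).hasDerivAt)
    (((hg.comp hx.continuous).dotProduct hx').intervalIntegrable a b)

section QuadraticForms

variable {d : ℕ} {B D : Matrix (Fin d) (Fin d) ℝ} {u v : Fin d → ℝ}

theorem dotProduct_mulVec_self_eq_zero_of_transpose_eq_neg (hB : Bᵀ = -B) :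
    v ⬝ᵥ B *ᵥ v = 0 := by
  have h : v ⬝ᵥ B *ᵥ v = -(v ⬝ᵥ B *ᵥ v) := by
    conv_lhs =>
      rw [dotProduct_mulVec, ← mulVec_transpose, hB, neg_mulVec, neg_dotProduct, dotProduct_comm]
  linarith

theorem dotProduct_mulVec_eq_zero_of_vecMul_eq_zero (hB : v ᵥ* B = 0) : v ⬝ᵥ B *ᵥ u = 0 := by
  rw [dotProduct_mulVec, hB, zero_dotProduct]

theorem energy_rate_eq_zero (hB : Bᵀ = -B) (hD : u ᵥ* D = 0) :
    u ⬝ᵥ B *ᵥ u + u ⬝ᵥ D *ᵥ v = 0 := by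
  rw [dotProduct_mulVec_self_eq_zero_of_transpose_eq_neg hB,
    dotProduct_mulVec_eq_zero_of_vecMul_eq_zero hD, add_zero]

theorem entropy_rate_nonneg (hB : v ᵥ* B = 0) (hD : 0 ≤ v ⬝ᵥ D *ᵥ v) :
    0 ≤ v ⬝ᵥ B *ᵥ u + v ⬝ᵥ D *ᵥ v := by
  rwa [dotProduct_mulVec_eq_zero_of_vecMul_eq_zero hB, zero_add]

end QuadraticForms

theorem generic_ode_scheme_energy_entropy_general
    (d s : ℕ) (a b : ℝ)
    (I : (ℝ → ℝ) →ₗ[ℝ] ℝ)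
    (hIpos : ∀ φ : ℝ → ℝ, (∀ t, 0 ≤ φ t) → 0 ≤ I φ)
    (E S : (Fin d → ℝ) → ℝ) (gE gS : (Fin d → ℝ) → (Fin d → ℝ))
    (hE : ∀ z, HasFDerivAt E (dotCLM (gE z)) z) (hgE : Continuous gE)
    (hS : ∀ z, HasFDerivAt S (dotCLM (gS z)) z) (hgS : Continuous gS)
    (Bt Dt : (Fin d → ℝ) → (Fin d → ℝ) → Matrix (Fin d) (Fin d) ℝ)
    (hBskew : ∀ z w, (Bt z w)ᵀ = -(Bt z w))
    (hDpos : ∀ z w (v : Fin d → ℝ), 0 ≤ v ⬝ᵥ (Dt z w).mulVec v)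
    (hBdeg : ∀ z w, Matrix.vecMul w (Bt z w) = 0)
    (hDdeg : ∀ z w, Matrix.vecMul w (Dt z w) = 0)
    (x : ℝ → Fin d → ℝ) (hx : IsPolyMap s x)
    (gEd gSd : ℝ → Fin d → ℝ)
    (hgEd : IsPolyMap (s - 1) gEd) (hgSd : IsPolyMap (s - 1) gSd)
    (h1 : ∀ y : ℝ → Fin d → ℝ, IsPolyMap (s - 1) y →
      I (fun t => y t ⬝ᵥ deriv x t) =
        I (fun t => y t ⬝ᵥ (Bt (x t) (gSd t)).mulVec (gEd t)
              + y t ⬝ᵥ (Dt (x t) (gEd t)).mulVec (gSd t)))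
    (h2 : ∀ y : ℝ → Fin d → ℝ, IsPolyMap (s - 1) y →
      I (fun t => gEd t ⬝ᵥ y t) = ∫ t in a..b, gE (x t) ⬝ᵥ y t)
    (h3 : ∀ y : ℝ → Fin d → ℝ, IsPolyMap (s - 1) y →
      I (fun t => gSd t ⬝ᵥ y t) = ∫ t in a..b, gS (x t) ⬝ᵥ y t) :
    E (x b) = E (x a) ∧ S (x a) ≤ S (x b) := by
  have hx' := hx.deriv
  have hEdiff : E (x b) - E (x a) = I (fun t => gEd t ⬝ᵥ deriv x t) := by
    rw [h2 _ hx', integral_dotProduct_deriv_eq_sub hE hgE hx.differentiable hx'.continuous]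
  have hSdiff : S (x b) - S (x a) = I (fun t => gSd t ⬝ᵥ deriv x t) := by
    rw [h3 _ hx', integral_dotProduct_deriv_eq_sub hS hgS hx.differentiable hx'.continuous]
  rw [h1 _ hgEd] at hEdiff
  rw [h1 _ hgSd] at hSdiff
  have hEzero : (fun t => gEd t ⬝ᵥ (Bt (x t) (gSd t)).mulVec (gEd t)
      + gEd t ⬝ᵥ (Dt (x t) (gEd t)).mulVec (gSd t)) = 0 :=
    funext fun t => energy_rate_eq_zero (hBskew _ _) (hDdeg _ _)
  have hSnonneg := hIpos _ fun t => entropy_rate_nonneg (u := gEd t) (hBdeg (x t) (gSd t))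
    (hDpos (x t) (gEd t) (gSd t))
  rw [hEzero, map_zero] at hEdiff
  exact ⟨sub_eq_zero.1 hEdiff, sub_nonneg.1 (hSdiff ▸ hSnonneg)⟩

/-- Theorem 3.2: the auxiliary-variable discretisation of the GENERIC ODE
`ẋ = B(x)∇E(x) + D(x)∇S(x)` with a sign-preserving quadrature functional conserves the
energy `E` and does not decrease the entropy `S` over the timestep `[a, b]`. -/
theorem generic_ode_scheme_energy_entropy
    (d s : ℕ) (hd : 1 ≤ d) (hs : 1 ≤ s) (a b : ℝ) (hab : a < b)
    (I : (ℝ → ℝ) →ₗ[ℝ] ℝ)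
    (hIpos : ∀ φ : ℝ → ℝ, (∀ t, 0 ≤ φ t) → 0 ≤ I φ)
    (E S : (Fin d → ℝ) → ℝ) (gE gS : (Fin d → ℝ) → (Fin d → ℝ))
    (hE : ∀ z, HasFDerivAt E (dotCLM (gE z)) z) (hgE : Continuous gE)
    (hS : ∀ z, HasFDerivAt S (dotCLM (gS z)) z) (hgS : Continuous gS)
    (Bt Dt : (Fin d → ℝ) → (Fin d → ℝ) → Matrix (Fin d) (Fin d) ℝ)
    (hBskew : ∀ z w, (Bt z w)ᵀ = -(Bt z w))
    (hDpos : ∀ z w (v : Fin d → ℝ), 0 ≤ v ⬝ᵥ (Dt z w).mulVec v)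
    (hBdeg : ∀ z w, Matrix.vecMul w (Bt z w) = 0)
    (hDdeg : ∀ z w, Matrix.vecMul w (Dt z w) = 0)
    (x : ℝ → Fin d → ℝ) (hx : IsPolyMap s x)
    (gEd gSd : ℝ → Fin d → ℝ)
    (hgEd : IsPolyMap (s - 1) gEd) (hgSd : IsPolyMap (s - 1) gSd)
    (h1 : ∀ y : ℝ → Fin d → ℝ, IsPolyMap (s - 1) y →
      I (fun t => y t ⬝ᵥ deriv x t) =
        I (fun t => y t ⬝ᵥ (Bt (x t) (gSd t)).mulVec (gEd t)
              + y t ⬝ᵥ (Dt (x t) (gEd t)).mulVec (gSd t)))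
    (h2 : ∀ y : ℝ → Fin d → ℝ, IsPolyMap (s - 1) y →
      I (fun t => gEd t ⬝ᵥ y t) = ∫ t in a..b, gE (x t) ⬝ᵥ y t)
    (h3 : ∀ y : ℝ → Fin d → ℝ, IsPolyMap (s - 1) y →
      I (fun t => gSd t ⬝ᵥ y t) = ∫ t in a..b, gS (x t) ⬝ᵥ y t) :
    E (x b) = E (x a) ∧ S (x a) ≤ S (x b) :=
  generic_ode_scheme_energy_entropy_general d s a b I hIpos E S gE gS hE hgE hS hgS Bt Dt hBskew
    hDpos hBdeg hDdeg x hx gEd gSd hgEd hgSd h1 h2 h3
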